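/- For any defeasible theory D and literal l, if l is not weakly supported (D ⊢ −σ⁻ l) then l is not supported (D ⊢ −σ l). -/

import Mathlib

/-- Literals: an atom together with a polarity. -/
structure Lit where
  atom : Nat
  pos : Bool
deriving DecidableEq

/-- The complement `~l` of a literal. -/
def Lit.neg (l : Lit) : Lit := ⟨l.atom, !l.pos⟩

/-- A defeasible rule `r : a₁,…,aₙ ⇒ b`. -/
structure Rule where
  prem : List Lit
  head : Lit
deriving DecidableEq

/-- A defeasible theory `D = (F, R, >)`. -/
structure DTheory where
  facts : Set Lit
  rules : Set Rule
  sup : Rule → Rule → Prop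

/-- Acyclicity of the superiority relation. -/
def AcyclicRel {α : Type*} (r : α → α → Prop) : Prop :=
  ∀ a, ¬ Relation.TransGen r a a

/-- Stages of ambiguity-blocking derivations: `true` is the positive tag `+∂`,
    `false` is the negative (constructive refutation) tag `−∂`; the `ℕ`
    argument bounds the length of the derivation. -/
def partialStage (D : DTheory) : ℕ → Bool → Lit → Prop
  | 0, _, _ => False
  | n + 1, true, l =>
      l ∈ D.facts ∨
      ∃ r ∈ D.rules, r.head = l ∧ (∀ a ∈ r.prem, partialStage D n true a) ∧
        ∀ s ∈ D.rules, s.head = l.neg →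
          (∃ a ∈ s.prem, partialStage D n false a) ∨
          ∃ t ∈ D.rules, t.head = l ∧ (∀ a ∈ t.prem, partialStage D n true a) ∧ D.sup t s
  | n + 1, false, l =>
      l ∉ D.facts ∧
      ∀ r ∈ D.rules, r.head = l →
        (∃ a ∈ r.prem, partialStage D n false a) ∨
        ∃ s ∈ D.rules, s.head = l.neg ∧ (∀ a ∈ s.prem, partialStage D n true a) ∧ ¬ D.sup r s

/-- `D ⊢ +∂ l` : `l` is defeasibly provable with ambiguity blocking. -/
def PlusPartial (D : DTheory) (l : Lit) : Prop := ∃ n, partialStage D n true l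

/-- `D ⊢ −∂ l` : `l` is defeasibly rejected with ambiguity blocking. -/
def MinusPartial (D : DTheory) (l : Lit) : Prop := ∃ n, partialStage D n false l

/-- The four ambiguity-propagation tags `+δ, −δ, +σ, −σ`. -/
inductive DTag | pd | md | ps | ms
deriving DecidableEq

/-- Stages of ambiguity-propagation derivations, defining by mutual recursion
    `+δ` (tag `.pd`), `−δ` (tag `.md`), support `+σ` (tag `.ps`) and `−σ` (tag `.ms`). -/
def deltaStage (D : DTheory) : ℕ → DTag → Lit → Prop
  | 0, _, _ => False
  | n + 1, .pd, l =>
      l ∈ D.facts ∨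
      ∃ r ∈ D.rules, r.head = l ∧ (∀ a ∈ r.prem, deltaStage D n .pd a) ∧
        ∀ s ∈ D.rules, s.head = l.neg →
          (∃ a ∈ s.prem, deltaStage D n .ms a) ∨
          ∃ t ∈ D.rules, t.head = l ∧ (∀ a ∈ t.prem, deltaStage D n .pd a) ∧ D.sup t s
  | n + 1, .md, l =>
      l ∉ D.facts ∧
      ∀ r ∈ D.rules, r.head = l →
        (∃ a ∈ r.prem, deltaStage D n .md a) ∨
        ∃ s ∈ D.rules, s.head = l.neg ∧ (∀ a ∈ s.prem, deltaStage D n .ps a) ∧ ¬ D.sup r s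
  | n + 1, .ps, l =>
      l ∈ D.facts ∨
      ∃ r ∈ D.rules, r.head = l ∧ (∀ a ∈ r.prem, deltaStage D n .ps a) ∧
        ∀ s ∈ D.rules, s.head = l.neg →
          (∃ a ∈ s.prem, deltaStage D n .md a) ∨ ¬ D.sup s r
  | n + 1, .ms, l =>
      l ∉ D.facts ∧
      ∀ r ∈ D.rules, r.head = l →
        (∃ a ∈ r.prem, deltaStage D n .ms a) ∨
        ∃ s ∈ D.rules, s.head = l.neg ∧ (∀ a ∈ s.prem, deltaStage D n .pd a) ∧ D.sup s r

/-- `D ⊢ +δ l` : defeasible provability with ambiguity propagation. -/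
def PlusDelta (D : DTheory) (l : Lit) : Prop := ∃ n, deltaStage D n .pd l

/-- `D ⊢ −δ l` : defeasible rejection with ambiguity propagation. -/
def MinusDelta (D : DTheory) (l : Lit) : Prop := ∃ n, deltaStage D n .md l

/-- `D ⊢ +σ l` : `l` is supported. -/
def PlusSigma (D : DTheory) (l : Lit) : Prop := ∃ n, deltaStage D n .ps l

/-- `D ⊢ −σ l` : `l` is not supported. -/
def MinusSigma (D : DTheory) (l : Lit) : Prop := ∃ n, deltaStage D n .ms l

/-- Stages of weak support `+σ⁻` (`true`) and its refutation `−σ⁻` (`false`). -/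
def sigmaMStage (D : DTheory) : ℕ → Bool → Lit → Prop
  | 0, _, _ => False
  | n + 1, true, l =>
      l ∈ D.facts ∨
      ∃ r ∈ D.rules, r.head = l ∧ ∀ a ∈ r.prem, sigmaMStage D n true a
  | n + 1, false, l =>
      l ∉ D.facts ∧
      ∀ r ∈ D.rules, r.head = l → ∃ a ∈ r.prem, sigmaMStage D n false a

/-- `D ⊢ +σ⁻ l` : `l` is weakly supported (pure forward chaining). -/
def PlusSigmaM (D : DTheory) (l : Lit) : Prop := ∃ n, sigmaMStage D n true l

/-- `D ⊢ −σ⁻ l` : `l` is not weakly supported. -/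
def MinusSigmaM (D : DTheory) (l : Lit) : Prop := ∃ n, sigmaMStage D n false l

/-- A defeasible deontic theory: evidential facts, obligation facts `O l`,
    evidential rules `⇒` and deontic rules `⇒_O`, with superiority `>`. -/
structure DDTheory where
  facts : Set Lit
  ofacts : Set Lit
  rules : Set Rule
  drules : Set Rule
  sup : Rule → Rule → Prop

/-- The evidential part of a deontic theory. -/
def DDTheory.evid (D : DDTheory) : DTheory := ⟨D.facts, D.rules, D.sup⟩

/-- `D ⊢ +∂_O l` : ambiguity-blocking deontic provability (`l` is obligatory). -/
def PlusPartialO (D : DDTheory) (l : Lit) : Prop :=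
  l ∈ D.ofacts ∨
  ∃ r ∈ D.drules, r.head = l ∧ (∀ a ∈ r.prem, PlusPartial D.evid a) ∧
    ∀ s ∈ D.drules, s.head = l.neg →
      (∃ a ∈ s.prem, MinusPartial D.evid a) ∨
      ∃ t ∈ D.drules, t.head = l ∧ (∀ a ∈ t.prem, PlusPartial D.evid a) ∧ D.sup t s

/-- `D ⊢ −∂_O l` : ambiguity-blocking deontic refutation. -/
def MinusPartialO (D : DDTheory) (l : Lit) : Prop :=
  l ∉ D.ofacts ∧
  ∀ r ∈ D.drules, r.head = l →
    (∃ a ∈ r.prem, MinusPartial D.evid a) ∨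
    ∃ s ∈ D.drules, s.head = l.neg ∧ (∀ a ∈ s.prem, PlusPartial D.evid a) ∧ ¬ D.sup r s

/-- `D ⊢ +δ_O l` : ambiguity-propagation deontic provability. -/
def PlusDeltaO (D : DDTheory) (l : Lit) : Prop :=
  l ∈ D.ofacts ∨
  ∃ r ∈ D.drules, r.head = l ∧ (∀ a ∈ r.prem, PlusDelta D.evid a) ∧
    ∀ s ∈ D.drules, s.head = l.neg →
      (∃ a ∈ s.prem, MinusSigma D.evid a) ∨
      ∃ t ∈ D.drules, t.head = l ∧ (∀ a ∈ t.prem, PlusDelta D.evid a) ∧ D.sup t s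

/-- `D ⊢ −δ_O l` : ambiguity-propagation deontic refutation. -/
def MinusDeltaO (D : DDTheory) (l : Lit) : Prop :=
  l ∉ D.ofacts ∧
  ∀ r ∈ D.drules, r.head = l →
    (∃ a ∈ r.prem, MinusDelta D.evid a) ∨
    ∃ s ∈ D.drules, s.head = l.neg ∧ (∀ a ∈ s.prem, PlusSigma D.evid a) ∧ ¬ D.sup r s

/-- `D ⊢ +σ_O l` : credulous deontic support. -/
def PlusSigmaO (D : DDTheory) (l : Lit) : Prop :=
  l ∈ D.ofacts ∨
  ∃ r ∈ D.drules, r.head = l ∧ (∀ a ∈ r.prem, PlusSigma D.evid a) ∧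
    ∀ s ∈ D.drules, s.head = l.neg →
      (∃ a ∈ s.prem, MinusDelta D.evid a) ∨ ¬ D.sup s r

/-- A set of literals contains no complementary pair. -/
def ConsistentFacts (F : Set Lit) : Prop := ∀ l : Lit, ¬ (l ∈ F ∧ l.neg ∈ F)

/-- `l` is `∂`-weakly permitted in `D` : `D ⊢ −∂_O ~l`. -/
def WeaklyPermittedPartial (D : DDTheory) (l : Lit) : Prop := MinusPartialO D l.neg

/-- `l` is `δ`-weakly permitted in `D` : `D ⊢ −δ_O ~l`. -/
def WeaklyPermittedDelta (D : DDTheory) (l : Lit) : Prop := MinusDeltaO D l.neg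

theorem deltaStage_ms_of_sigmaMStage_false {D : DTheory} :
    ∀ {n : ℕ} {l : Lit}, sigmaMStage D n false l → deltaStage D n .ms l
  | 0, _, h => h
  | _ + 1, _, ⟨hfact, hrules⟩ => ⟨hfact, fun r hr hhead =>
      let ⟨a, ha, hna⟩ := hrules r hr hhead
      Or.inl ⟨a, ha, deltaStage_ms_of_sigmaMStage_false hna⟩⟩

/-- `D ⊢ −σ⁻ l` implies `D ⊢ −σ l`. -/
theorem minusSigmaM_implies_minusSigma (D : DTheory) (l : Lit)
    (h : MinusSigmaM D l) : MinusSigma D l :=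
  h.imp fun _ => deltaStage_ms_of_sigmaMStage_false
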